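/- The groups PL_2(ℝ) and PL_2(I) are isomorphic as groups. -/

import Mathlib

/-- A real number is dyadic rational if it has the form `k / 2 ^ n`. -/
def IsDyadic (t : ℝ) : Prop := ∃ (k : ℤ) (n : ℕ), t = (k : ℝ) / 2 ^ n

/-- An (orientation-preserving, i.e. order-preserving) homeomorphism of `ℝ`
belongs to `PL₂(ℝ)` if it has finitely many breakpoints `t₀ < t₁ < ⋯ < tₘ`,
each with dyadic rational coordinates, it is affine with slope an integer
power of `2` on each piece `[tᵢ, tᵢ₊₁]`, and there are integers `a`, `b` with
`f(s) = s - a` for `s ≤ t₀` and `f(s) = s - b` for `s ≥ tₘ`. -/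
def IsPL2R (f : ℝ ≃o ℝ) : Prop :=
  ∃ (m : ℕ) (t : Fin (m + 1) → ℝ) (z : Fin m → ℤ) (a b : ℤ),
    StrictMono t ∧ (∀ i, IsDyadic (t i) ∧ IsDyadic (f (t i))) ∧
    (∀ s : ℝ, s ≤ t 0 → f s = s - a) ∧
    (∀ s : ℝ, t (Fin.last m) ≤ s → f s = s - b) ∧
    (∀ (i : Fin m), ∀ s ∈ Set.Icc (t i.castSucc) (t i.succ),
      f s = f (t i.castSucc) + (2 : ℝ) ^ (z i) * (s - t i.castSucc))

/-- An order-preserving homeomorphism of `[0,1]` belongs to `PL₂(I)` if there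
is a finite dyadic partition `0 = t₀ < ⋯ < tₘ = 1` on each piece of which the
map is affine with slope an integer power of `2`. -/
def IsPL2I (f : Set.Icc (0:ℝ) 1 ≃o Set.Icc (0:ℝ) 1) : Prop :=
  ∃ (m : ℕ) (t : Fin (m + 1) → ℝ) (z : Fin m → ℤ),
    t 0 = 0 ∧ t (Fin.last m) = 1 ∧ StrictMono t ∧ (∀ i, IsDyadic (t i)) ∧
    ∀ (i : Fin m) (u v : Set.Icc (0:ℝ) 1),
      (u : ℝ) ∈ Set.Icc (t i.castSucc) (t i.succ) →
      (v : ℝ) ∈ Set.Icc (t i.castSucc) (t i.succ) →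
      (f u : ℝ) - (f v : ℝ) = (2 : ℝ) ^ (z i) * ((u : ℝ) - (v : ℝ))


/-!
The piecewise-linear homeomorphism `phi : ℝ → (0, 1)`, which maps `[n, n + 1]` affinely onto
`[2 ^ (n - 1), 2 ^ n]` for `n < 0` and is symmetric about `(0, 1 / 2)`, turns translation by an
integer near `-∞` (resp. `+∞`) into multiplication by a power of `2` near `0` (resp. near `1`).
Since `phi` is itself piecewise linear with integer breakpoints and slopes in `2 ^ ℤ`, conjugation
by `phi`, extended by fixing `0` and `1`, is a group isomorphism from the order automorphisms of
`ℝ` onto those of `[0, 1]` which carries `PL₂(ℝ)` onto `PL₂(I)`: on a compact middle range the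
conjugate is a composition of three dyadic piecewise-linear maps, and the translation tails become
the linear pieces at the ends. Conversely, a map in `PL₂(I)` is linear near `0` and near `1`, so
its conjugate is a translation near `±∞`.
-/

open Set

namespace IsDyadic

lemma intCast (k : ℤ) : IsDyadic k := ⟨k, 0, by simp⟩

lemma zero : IsDyadic 0 := by exact_mod_cast intCast 0

lemma one : IsDyadic 1 := by exact_mod_cast intCast 1

lemma two_zpow (z : ℤ) : IsDyadic (2 ^ z) := by
  rcases Int.eq_nat_or_neg z with ⟨n, rfl | rfl⟩
  · exact ⟨2 ^ n, 0, by simp⟩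
  · exact ⟨1, n, by simp⟩

variable {x y : ℝ}

lemma add (hx : IsDyadic x) (hy : IsDyadic y) : IsDyadic (x + y) := by
  obtain ⟨k, n, rfl⟩ := hx
  obtain ⟨l, m, rfl⟩ := hy
  exact ⟨k * 2 ^ m + l * 2 ^ n, n + m, by push_cast; field_simp; ring⟩

lemma mul (hx : IsDyadic x) (hy : IsDyadic y) : IsDyadic (x * y) := by
  obtain ⟨k, n, rfl⟩ := hx
  obtain ⟨l, m, rfl⟩ := hy
  exact ⟨k * l, n + m, by push_cast; field_simp; ring⟩

lemma neg (hx : IsDyadic x) : IsDyadic (-x) := by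
  simpa using (intCast (-1)).mul hx

lemma sub (hx : IsDyadic x) (hy : IsDyadic y) : IsDyadic (x - y) := by
  simpa only [sub_eq_add_neg] using hx.add hy.neg

lemma add_zpow_mul_sub {a b : ℝ} (z : ℤ) (ha : IsDyadic a) (hx : IsDyadic x) (hb : IsDyadic b) :
    IsDyadic (a + 2 ^ z * (x - b)) :=
  ha.add ((two_zpow z).mul (hx.sub hb))

end IsDyadic

/-! ### Dyadic piecewise-linear maps on an interval -/

structure DyadicAffineOn (f : ℝ → ℝ) (z : ℤ) (a b : ℝ) : Prop where
  le : a ≤ b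
  isDyadic_left : IsDyadic a
  isDyadic_right : IsDyadic b
  isDyadic_apply_left : IsDyadic (f a)
  eq : ∀ s ∈ Icc a b, f s = f a + 2 ^ z * (s - a)

namespace DyadicAffineOn

variable {f g : ℝ → ℝ} {z : ℤ} {a b c d y : ℝ}

lemma isDyadic_apply (h : DyadicAffineOn f z a b) (hc : IsDyadic c) (hc' : c ∈ Icc a b) :
    IsDyadic (f c) := by
  rw [h.eq c hc']
  exact h.isDyadic_apply_left.add_zpow_mul_sub z hc h.isDyadic_left

lemma mono (h : DyadicAffineOn f z a b) (hc : IsDyadic c) (hd : IsDyadic d)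
    (hac : a ≤ c) (hcd : c ≤ d) (hdb : d ≤ b) : DyadicAffineOn f z c d where
  le := hcd
  isDyadic_left := hc
  isDyadic_right := hd
  isDyadic_apply_left := h.isDyadic_apply hc ⟨hac, hcd.trans hdb⟩
  eq s hs := by
    rw [h.eq s ⟨hac.trans hs.1, hs.2.trans hdb⟩, h.eq c ⟨hac, hcd.trans hdb⟩]
    ring

lemma monotoneOn (h : DyadicAffineOn f z a b) : MonotoneOn f (Icc a b) := by
  intro s hs t ht hst
  rw [h.eq s hs, h.eq t ht]
  gcongr

lemma mem_Icc_and_apply_eq (h : DyadicAffineOn f z a b) (hy : y ∈ Icc (f a) (f b)) :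
    a + 2 ^ (-z) * (y - f a) ∈ Icc a b ∧ f (a + 2 ^ (-z) * (y - f a)) = y := by
  have hinv : (2 : ℝ) ^ z * 2 ^ (-z) = 1 := by rw [← zpow_add₀ two_ne_zero]; simp
  have hle : 2 ^ (-z) * (y - f a) ≤ b - a :=
    calc 2 ^ (-z) * (y - f a) ≤ 2 ^ (-z) * (f b - f a) := by gcongr; exact hy.2
    _ = b - a := by rw [h.eq b ⟨h.le, le_rfl⟩]; linear_combination (b - a) * hinv
  have hs : a + 2 ^ (-z) * (y - f a) ∈ Icc a b :=
    ⟨le_add_of_nonneg_right (mul_nonneg (by positivity) (sub_nonneg.2 hy.1)), by linarith⟩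
  refine ⟨hs, ?_⟩
  rw [h.eq _ hs]
  linear_combination (y - f a) * hinv

lemma inverse (h : DyadicAffineOn f z a b) (hgf : LeftInvOn g f (Icc a b)) :
    DyadicAffineOn g (-z) (f a) (f b) where
  le := h.monotoneOn ⟨le_rfl, h.le⟩ ⟨h.le, le_rfl⟩ h.le
  isDyadic_left := h.isDyadic_apply_left
  isDyadic_right := h.isDyadic_apply h.isDyadic_right ⟨h.le, le_rfl⟩
  isDyadic_apply_left := by rw [hgf ⟨le_rfl, h.le⟩]; exact h.isDyadic_left
  eq y hy := by
    obtain ⟨hs, hfs⟩ := h.mem_Icc_and_apply_eq hy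
    rw [← hfs, hgf hs, hfs, hgf ⟨le_rfl, h.le⟩]

end DyadicAffineOn

/-- Dyadic piecewise-linear maps on `[a, b]`, as affine pieces glued at dyadic breakpoints;
`of_fin` and `exists_fin` relate this to explicit lists of breakpoints. -/
inductive DyadicPLOn (f : ℝ → ℝ) : ℝ → ℝ → Prop
  | affine {a b : ℝ} (z : ℤ) : DyadicAffineOn f z a b → DyadicPLOn f a b
  | trans {a b c : ℝ} : DyadicPLOn f a b → DyadicPLOn f b c → DyadicPLOn f a c

namespace DyadicPLOn

variable {f g : ℝ → ℝ} {a b c d : ℝ}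

lemma le (h : DyadicPLOn f a b) : a ≤ b := by
  induction h with
  | affine z h => exact h.le
  | trans _ _ h₁ h₂ => exact h₁.trans h₂

lemma isDyadic_left (h : DyadicPLOn f a b) : IsDyadic a := by
  induction h with
  | affine z h => exact h.isDyadic_left
  | trans _ _ h₁ _ => exact h₁

lemma isDyadic_right (h : DyadicPLOn f a b) : IsDyadic b := by
  induction h with
  | affine z h => exact h.isDyadic_right
  | trans _ _ _ h₂ => exact h₂

lemma isDyadic_apply_left (h : DyadicPLOn f a b) : IsDyadic (f a) := by
  induction h with
  | affine z h => exact h.isDyadic_apply_left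
  | trans _ _ h₁ _ => exact h₁

lemma isDyadic_apply_right (h : DyadicPLOn f a b) : IsDyadic (f b) := by
  induction h with
  | affine z h => exact h.isDyadic_apply h.isDyadic_right ⟨h.le, le_rfl⟩
  | trans _ _ _ h₂ => exact h₂

lemma congr (h : DyadicPLOn f a b) (hfg : EqOn f g (Icc a b)) : DyadicPLOn g a b := by
  induction h with
  | @affine a b z h =>
    have hfga := hfg ⟨le_rfl, h.le⟩
    refine affine z ⟨h.le, h.isDyadic_left, h.isDyadic_right, hfga ▸ h.isDyadic_apply_left,
      fun s hs => ?_⟩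
    rw [← hfg hs, ← hfga, h.eq s hs]
  | trans h₁ h₂ ih₁ ih₂ =>
    exact trans (ih₁ (hfg.mono (Icc_subset_Icc_right h₂.le)))
      (ih₂ (hfg.mono (Icc_subset_Icc_left h₁.le)))

lemma monotoneOn (h : DyadicPLOn f a b) : MonotoneOn f (Icc a b) := by
  induction h with
  | affine z h => exact h.monotoneOn
  | trans h₁ h₂ ih₁ ih₂ =>
    rw [← Icc_union_Icc_eq_Icc h₁.le h₂.le]
    exact ih₁.union_right ih₂ (isGreatest_Icc h₁.le) (isLeast_Icc h₂.le)

lemma mono (h : DyadicPLOn f a b) (hc : IsDyadic c) (hd : IsDyadic d)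
    (hac : a ≤ c) (hcd : c ≤ d) (hdb : d ≤ b) : DyadicPLOn f c d := by
  induction h generalizing c d with
  | affine z h => exact affine z (h.mono hc hd hac hcd hdb)
  | @trans a e b h₁ h₂ ih₁ ih₂ =>
    rcases le_total d e with hde | hed
    · exact ih₁ hc hd hac hcd hde
    rcases le_total e c with hec | hce
    · exact ih₂ hc hd hec hcd hdb
    exact trans (ih₁ hc h₁.isDyadic_right hac hce le_rfl) (ih₂ h₂.isDyadic_left hd le_rfl hed hdb)

end DyadicPLOn

lemma DyadicAffineOn.comp {f g : ℝ → ℝ} {z : ℤ} {a b c d : ℝ} (hf : DyadicAffineOn f z a b)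
    (hg : DyadicPLOn g c d) (hc : f a = c) (hd : f b = d) : DyadicPLOn (g ∘ f) a b := by
  induction hg generalizing a b with
  | @affine c d w hg =>
    subst hc hd
    refine .affine (w + z) ⟨hf.le, hf.isDyadic_left, hf.isDyadic_right,
      hg.isDyadic_apply_left, fun s hs => ?_⟩
    have hfs : f s ∈ Icc (f a) (f b) :=
      ⟨hf.monotoneOn ⟨le_rfl, hf.le⟩ hs hs.1, hf.monotoneOn hs ⟨hf.le, le_rfl⟩ hs.2⟩
    simp only [Function.comp_apply]
    rw [hg.eq _ hfs, hf.eq s hs, zpow_add₀ two_ne_zero]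
    ring
  | @trans c e d hg₁ hg₂ ih₁ ih₂ =>
    subst hc hd
    -- the breakpoint `e` of `g` pulls back to a dyadic breakpoint of `f` in `[a, b]`
    obtain ⟨he, hfe⟩ := hf.mem_Icc_and_apply_eq ⟨hg₁.le, hg₂.le⟩
    have he' : IsDyadic (a + 2 ^ (-z) * (e - f a)) :=
      hf.isDyadic_left.add_zpow_mul_sub _ hg₁.isDyadic_right hf.isDyadic_apply_left
    exact .trans (ih₁ (hf.mono hf.isDyadic_left he' le_rfl he.1 he.2) rfl hfe)
      (ih₂ (hf.mono he' hf.isDyadic_right he.1 he.2 le_rfl) hfe rfl)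

namespace DyadicPLOn

variable {f g : ℝ → ℝ} {a b : ℝ}

lemma comp (hg : DyadicPLOn g (f a) (f b)) (hf : DyadicPLOn f a b) :
    DyadicPLOn (g ∘ f) a b := by
  induction hf with
  | affine z hf => exact hf.comp hg rfl rfl
  | @trans a b c h₁ h₂ ih₁ ih₂ =>
    have hm := (h₁.trans h₂).monotoneOn
    have hab : f a ≤ f b := hm ⟨le_rfl, h₁.le.trans h₂.le⟩ ⟨h₁.le, h₂.le⟩ h₁.le
    have hbc : f b ≤ f c := hm ⟨h₁.le, h₂.le⟩ ⟨h₁.le.trans h₂.le, le_rfl⟩ h₂.le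
    exact trans (ih₁ (hg.mono hg.isDyadic_left h₁.isDyadic_apply_right le_rfl hab hbc))
      (ih₂ (hg.mono h₁.isDyadic_apply_right hg.isDyadic_right hab hbc le_rfl))

lemma inverse (h : DyadicPLOn f a b) (hgf : LeftInvOn g f (Icc a b)) :
    DyadicPLOn g (f a) (f b) := by
  induction h with
  | affine z h => exact affine (-z) (h.inverse hgf)
  | trans h₁ h₂ ih₁ ih₂ =>
    exact trans (ih₁ (hgf.mono (Icc_subset_Icc_right h₂.le)))
      (ih₂ (hgf.mono (Icc_subset_Icc_left h₁.le)))

lemma exists_eq_near_left (h : DyadicPLOn f a b) (hab : a < b) :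
    ∃ c, a < c ∧ ∃ z : ℤ, ∀ s ∈ Icc a c, f s = f a + 2 ^ z * (s - a) := by
  induction h with
  | affine z h => exact ⟨_, hab, z, h.eq⟩
  | trans h₁ _ ih₁ ih₂ =>
    rcases h₁.le.lt_or_eq with hae | rfl
    exacts [ih₁ hae, ih₂ hab]

lemma exists_eq_near_right (h : DyadicPLOn f a b) (hab : a < b) :
    ∃ c < b, ∃ z : ℤ, ∀ s ∈ Icc c b, f s = f b + 2 ^ z * (s - b) := by
  induction h with
  | @affine a b z h =>
    refine ⟨a, hab, z, fun s hs => ?_⟩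
    rw [h.eq s hs, h.eq b ⟨h.le, le_rfl⟩]
    ring
  | trans _ h₂ ih₁ ih₂ =>
    rcases h₂.le.lt_or_eq with heb | rfl
    exacts [ih₂ heb, ih₁ hab]

lemma of_fin {m : ℕ} {t : Fin (m + 1) → ℝ} (z : Fin m → ℤ) (ht : Monotone t)
    (hdy : ∀ i, IsDyadic (t i)) (hf₀ : IsDyadic (f (t 0)))
    (hf : ∀ i : Fin m, ∀ s ∈ Icc (t i.castSucc) (t i.succ),
      f s = f (t i.castSucc) + 2 ^ z i * (s - t i.castSucc)) :
    DyadicPLOn f (t 0) (t (Fin.last m)) := by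
  suffices ∀ i, DyadicPLOn f (t 0) (t i) from this _
  intro i
  induction i using Fin.induction with
  | zero =>
    exact affine 0 ⟨le_rfl, hdy 0, hdy 0, hf₀, fun s hs => by simp [le_antisymm hs.2 hs.1]⟩
  | succ i ih =>
    exact ih.trans (affine (z i) ⟨ht (Fin.castSucc_le_succ i), hdy _, hdy _,
      ih.isDyadic_apply_right, hf i⟩)

lemma exists_finset (h : DyadicPLOn f a b) :
    ∃ T : Finset ℝ, a ∈ T ∧ b ∈ T ∧ (∀ x ∈ T, x ∈ Icc a b ∧ IsDyadic x ∧ IsDyadic (f x)) ∧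
      ∀ p ∈ T, ∀ q ∈ T, p < q → (∀ x ∈ T, x ≤ p ∨ q ≤ x) →
        ∃ z : ℤ, ∀ s ∈ Icc p q, f s = f p + 2 ^ z * (s - p) := by
  classical
  induction h with
  | @affine a b z h =>
    refine ⟨{a, b}, by simp, by simp, ?_, ?_⟩
    · simp only [Finset.mem_insert, Finset.mem_singleton]
      rintro x (rfl | rfl)
      exacts [⟨⟨le_rfl, h.le⟩, h.isDyadic_left, h.isDyadic_apply_left⟩,
        ⟨⟨h.le, le_rfl⟩, h.isDyadic_right, h.isDyadic_apply h.isDyadic_right ⟨h.le, le_rfl⟩⟩]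
    · simp only [Finset.mem_insert, Finset.mem_singleton]
      rintro p (rfl | rfl) q (rfl | rfl) hpq -
      all_goals first | exact ⟨z, h.eq⟩ | exact absurd hpq (by linarith [h.le])
  | @trans a b c h₁ h₂ ih₁ ih₂ =>
    obtain ⟨T₁, haT₁, hbT₁, hT₁, hcons₁⟩ := ih₁
    obtain ⟨T₂, hbT₂, hcT₂, hT₂, hcons₂⟩ := ih₂
    refine ⟨T₁ ∪ T₂, Finset.mem_union_left _ haT₁, Finset.mem_union_right _ hcT₂, ?_, ?_⟩
    · intro x hx
      rcases Finset.mem_union.1 hx with hx | hx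
      · exact ⟨Icc_subset_Icc_right h₂.le (hT₁ x hx).1, (hT₁ x hx).2⟩
      · exact ⟨Icc_subset_Icc_left h₁.le (hT₂ x hx).1, (hT₂ x hx).2⟩
    intro p hp q hq hpq hcons
    have hleft : ∀ x ∈ T₁ ∪ T₂, x ≤ b → x ∈ T₁ := fun x hx hxb =>
      (Finset.mem_union.1 hx).elim id fun hx => le_antisymm hxb (hT₂ x hx).1.1 ▸ hbT₁
    have hright : ∀ x ∈ T₁ ∪ T₂, b ≤ x → x ∈ T₂ := fun x hx hbx =>
      (Finset.mem_union.1 hx).elim (fun hx => le_antisymm (hT₁ x hx).1.2 hbx ▸ hbT₂) id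
    rcases hcons b (Finset.mem_union_left _ hbT₁) with hbp | hqb
    · exact hcons₂ p (hright p hp hbp) q (hright q hq (hbp.trans hpq.le)) hpq
        fun x hx => hcons x (Finset.mem_union_right _ hx)
    · exact hcons₁ p (hleft p hp (hpq.le.trans hqb)) q (hleft q hq hqb) hpq
        fun x hx => hcons x (Finset.mem_union_left _ hx)

lemma exists_fin (h : DyadicPLOn f a b) :
    ∃ (m : ℕ) (t : Fin (m + 1) → ℝ) (z : Fin m → ℤ),
      t 0 = a ∧ t (Fin.last m) = b ∧ StrictMono t ∧ (∀ i, IsDyadic (t i) ∧ IsDyadic (f (t i))) ∧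
      ∀ i : Fin m, ∀ s ∈ Icc (t i.castSucc) (t i.succ),
        f s = f (t i.castSucc) + 2 ^ z i * (s - t i.castSucc) := by
  obtain ⟨T, haT, hbT, hT, hcons⟩ := h.exists_finset
  have hcard : T.card = T.card - 1 + 1 := (Nat.sub_add_cancel (Finset.card_pos.2 ⟨a, haT⟩)).symm
  set t := T.orderEmbOfFin hcard
  have hmem : ∀ i, t i ∈ T := T.orderEmbOfFin_mem hcard
  have hrange : ∀ x ∈ T, ∃ i, t i = x := fun x hx => by
    rwa [← Finset.mem_coe, ← Finset.range_orderEmbOfFin T hcard] at hx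
  have hpiece (i : Fin (T.card - 1)) : ∃ z : ℤ, ∀ s ∈ Icc (t i.castSucc) (t i.succ),
      f s = f (t i.castSucc) + 2 ^ z * (s - t i.castSucc) := by
    refine hcons _ (hmem _) _ (hmem _) (t.strictMono Fin.castSucc_lt_succ) fun x hx => ?_
    obtain ⟨j, rfl⟩ := hrange x hx
    rcases le_or_gt j i.castSucc with hj | hj
    exacts [.inl (t.monotone hj), .inr (t.monotone (Fin.castSucc_lt_iff_succ_le.1 hj))]
  choose z hz using hpiece
  obtain ⟨i, hi⟩ := hrange a haT
  obtain ⟨j, hj⟩ := hrange b hbT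
  refine ⟨_, t, z, ?_, ?_, t.strictMono, fun i => (hT _ (hmem i)).2, hz⟩
  · exact le_antisymm (hi ▸ t.monotone (Fin.zero_le i)) (hT _ (hmem 0)).1.1
  · exact le_antisymm (hT _ (hmem _)).1.2 (hj ▸ t.monotone (Fin.le_last j))

lemma extend {a b : ℤ} {L R L' R' : ℝ} (h : DyadicPLOn f L R)
    (ha : ∀ s ≤ L, f s = s - a) (hb : ∀ s, R ≤ s → f s = s - b)
    (hL'd : IsDyadic L') (hR'd : IsDyadic R') (hL' : L' ≤ L) (hR' : R ≤ R') :
    DyadicPLOn f L' R' := by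
  refine ((affine 0 ⟨hL', hL'd, h.isDyadic_left, ?_, fun s hs => ?_⟩).trans h).trans
    (affine 0 ⟨hR', h.isDyadic_right, hR'd, h.isDyadic_apply_right, fun s hs => ?_⟩)
  · rw [ha L' hL']
    exact hL'd.sub (.intCast a)
  · rw [ha s hs.2, ha L' hL', zpow_zero]
    ring
  · rw [hb s hs.1, hb R le_rfl, zpow_zero]
    ring

end DyadicPLOn

/-! ### The groups `PL₂(ℝ)` and `PL₂(I)` -/

lemma isPL2R_iff {f : ℝ ≃o ℝ} : IsPL2R f ↔ ∃ (a b : ℤ) (L R : ℝ),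
    (∀ s ≤ L, f s = s - a) ∧ (∀ s, R ≤ s → f s = s - b) ∧ DyadicPLOn f L R := by
  constructor
  · rintro ⟨m, t, z, a, b, hmono, hdy, ha, hb, hz⟩
    exact ⟨a, b, _, _, ha, hb, .of_fin z hmono.monotone (fun i => (hdy i).1) (hdy 0).2 hz⟩
  · rintro ⟨a, b, L, R, ha, hb, h⟩
    obtain ⟨m, t, z, rfl, rfl, hmono, hdy, hz⟩ := h.exists_fin
    exact ⟨m, t, z, a, b, hmono, hdy, ha, hb, hz⟩

open unitInterval

noncomputable def extendIcc (g : I ≃o I) (x : ℝ) : ℝ := (Set.IccExtend zero_le_one ⇑g x : I)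

section extendIcc

variable (g h : I ≃o I)

lemma extendIcc_coe (y : I) : extendIcc g y = g y := by
  simp [extendIcc, Set.IccExtend_val]

lemma extendIcc_of_mem {x : ℝ} (hx : x ∈ I) : extendIcc g x = g ⟨x, hx⟩ :=
  extendIcc_coe g ⟨x, hx⟩

lemma extendIcc_of_notMem_Ioo {x : ℝ} (hx : x ∈ I) (hx' : x ∉ Ioo 0 1) : extendIcc g x = x := by
  rw [extendIcc_of_mem g hx]
  obtain h | h : x = 0 ∨ x = 1 := by
    simp only [mem_Ioo, not_and_or, not_lt] at hx'
    rcases hx' with h | h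
    exacts [.inl (le_antisymm h hx.1), .inr (le_antisymm hx.2 h)]
  · subst h; exact congrArg Subtype.val g.map_bot
  · subst h; exact congrArg Subtype.val g.map_top

lemma extendIcc_zero : extendIcc g 0 = 0 :=
  extendIcc_of_notMem_Ioo g unitInterval.zero_mem (by simp)

lemma extendIcc_one : extendIcc g 1 = 1 :=
  extendIcc_of_notMem_Ioo g unitInterval.one_mem (by simp)

lemma strictMonoOn_extendIcc : StrictMonoOn (extendIcc g) I := fun x hx y hy hxy => by
  rw [extendIcc_of_mem g hx, extendIcc_of_mem g hy]
  exact g.strictMono (Subtype.mk_lt_mk.2 hxy)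

lemma extendIcc_mem_Ioo {x : ℝ} (hx : x ∈ Ioo 0 1) : extendIcc g x ∈ Ioo 0 1 := by
  have hxI := Ioo_subset_Icc_self hx
  constructor
  · simpa [extendIcc_zero] using strictMonoOn_extendIcc g unitInterval.zero_mem hxI hx.1
  · simpa [extendIcc_one] using strictMonoOn_extendIcc g hxI unitInterval.one_mem hx.2

lemma extendIcc_mul : extendIcc (g * h) = extendIcc g ∘ extendIcc h := by
  funext x
  simp [extendIcc, Set.IccExtend, Set.projIcc_val]

lemma extendIcc_symm_extendIcc {x : ℝ} (hx : x ∈ I) : extendIcc g.symm (extendIcc g x) = x := by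
  rw [extendIcc_of_mem g hx, extendIcc_coe, OrderIso.symm_apply_apply]

lemma extendIcc_extendIcc_symm {x : ℝ} (hx : x ∈ I) : extendIcc g (extendIcc g.symm x) = x := by
  rw [extendIcc_of_mem g.symm hx, extendIcc_coe, OrderIso.apply_symm_apply]

end extendIcc

lemma isPL2I_iff {g : I ≃o I} : IsPL2I g ↔ DyadicPLOn (extendIcc g) 0 1 := by
  constructor
  · rintro ⟨m, t, z, h₀, h₁, hmono, hdy, hz⟩
    have hI (i) : t i ∈ I :=
      ⟨h₀ ▸ hmono.monotone (Fin.zero_le i), h₁ ▸ hmono.monotone (Fin.le_last i)⟩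
    have h := DyadicPLOn.of_fin (f := extendIcc g) z hmono.monotone hdy
      (by rw [h₀, extendIcc_zero]; exact .zero) fun i s hs => by
        have hsI : s ∈ I := ⟨(hI _).1.trans hs.1, hs.2.trans (hI _).2⟩
        have := hz i ⟨s, hsI⟩ ⟨_, hI _⟩ hs ⟨le_rfl, hmono.monotone (Fin.castSucc_le_succ i)⟩
        rw [extendIcc_of_mem g hsI, extendIcc_of_mem g (hI _)]
        linarith
    rwa [h₀, h₁] at h
  · intro h
    obtain ⟨m, t, z, h₀, h₁, hmono, hdy, hz⟩ := h.exists_fin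
    refine ⟨m, t, z, h₀, h₁, hmono, fun i => (hdy i).1, fun i u v hu hv => ?_⟩
    have hu' := hz i u hu
    have hv' := hz i v hv
    rw [extendIcc_coe] at hu' hv'
    linarith

def pl2I : Subgroup (I ≃o I) where
  carrier := {g | IsPL2I g}
  one_mem' := isPL2I_iff.2 <| .affine 0
    ⟨zero_le_one, .zero, .one, by rw [extendIcc_zero]; exact .zero, fun s hs => by
      rw [extendIcc_of_mem 1 hs, extendIcc_zero]; simp⟩
  mul_mem' {g h} hg hh := isPL2I_iff.2 <| by
    rw [extendIcc_mul]
    refine DyadicPLOn.comp ?_ (isPL2I_iff.1 hh)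
    rw [extendIcc_zero, extendIcc_one]
    exact isPL2I_iff.1 hg
  inv_mem' {g} hg := isPL2I_iff.2 <| by
    simpa only [extendIcc_zero, extendIcc_one] using
      (isPL2I_iff.1 hg).inverse (g := extendIcc g⁻¹) fun x hx => extendIcc_symm_extendIcc g hx

/-! ### The homeomorphism `phi : ℝ → (0, 1)` -/

/-- The piecewise-linear interpolation of `x ↦ 2 ^ (x - 1)` at the integers. -/
noncomputable def expPL (x : ℝ) : ℝ := 2 ^ (⌊x⌋ - 1) * (Int.fract x + 1)

lemma expPL_add_intCast (x : ℝ) (c : ℤ) : expPL (x + c) = 2 ^ c * expPL x := by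
  rw [expPL, expPL, Int.floor_add_intCast, Int.fract_add_intCast,
    show ⌊x⌋ + c - 1 = c + (⌊x⌋ - 1) by ring, zpow_add₀ two_ne_zero, mul_assoc]

lemma expPL_eq_of_mem_Icc {n : ℤ} {x : ℝ} (hx : x ∈ Icc (n : ℝ) (n + 1)) :
    expPL x = 2 ^ (n - 1) * (x - n + 1) := by
  rcases hx.2.lt_or_eq with hlt | rfl
  · have hfl : ⌊x⌋ = n := Int.floor_eq_iff.2 ⟨hx.1, hlt⟩
    rw [expPL, hfl, Int.fract, hfl]
  · have hfl : ⌊(n : ℝ) + 1⌋ = n + 1 := by exact_mod_cast Int.floor_intCast (n + 1)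
    rw [expPL, hfl, Int.fract, hfl, add_sub_cancel_right, zpow_sub_one₀ two_ne_zero]
    push_cast
    ring

lemma expPL_pos (x : ℝ) : 0 < expPL x := by
  have := Int.fract_nonneg x
  unfold expPL
  positivity

lemma expPL_zero : expPL 0 = 1 / 2 := by
  simp [expPL]

lemma expPL_strictMono : StrictMono expPL := by
  intro x y hxy
  rcases (Int.floor_mono hxy.le).lt_or_eq with hlt | heq
  · calc expPL x < 2 ^ (⌊x⌋ - 1) * 2 := by
          unfold expPL; gcongr; linarith [Int.fract_lt_one x]
      _ = 2 ^ ⌊x⌋ := by rw [zpow_sub_one₀ two_ne_zero]; ring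
      _ ≤ 2 ^ (⌊y⌋ - 1) := zpow_le_zpow_right₀ one_le_two (by omega)
      _ ≤ expPL y := by
          unfold expPL; nth_rewrite 1 [← mul_one ((2 : ℝ) ^ (⌊y⌋ - 1))]
          gcongr; linarith [Int.fract_nonneg y]
  · unfold expPL
    rw [heq]
    gcongr
    rw [Int.fract, Int.fract, heq]
    linarith

lemma exists_expPL_eq {y : ℝ} (hy : 0 < y) : ∃ x, expPL x = y := by
  obtain ⟨n, hn₁, hn₂⟩ := exists_mem_Ico_zpow hy one_lt_two
  have hinv : (2 : ℝ) ^ n * 2 ^ (-n) = 1 := by rw [← zpow_add₀ two_ne_zero]; simp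
  have h₁ : 1 ≤ 2 ^ (-n) * y := by
    calc (1 : ℝ) = 2 ^ (-n) * 2 ^ n := by rw [mul_comm, hinv]
      _ ≤ 2 ^ (-n) * y := by gcongr
  have h₂ : 2 ^ (-n) * y ≤ 2 := by
    calc 2 ^ (-n) * y ≤ 2 ^ (-n) * 2 ^ (n + 1) := by gcongr
      _ = 2 := by rw [zpow_add_one₀ two_ne_zero]; linear_combination 2 * hinv
  refine ⟨n + 2 ^ (-n) * y, ?_⟩
  rw [expPL_eq_of_mem_Icc (n := n + 1) ⟨by push_cast; linarith, by push_cast; linarith⟩]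
  push_cast
  ring_nf
  linear_combination y * hinv

lemma IsDyadic.expPL {x : ℝ} (hx : IsDyadic x) : IsDyadic (expPL x) :=
  (IsDyadic.two_zpow _).mul ((hx.sub (IsDyadic.intCast _)).add IsDyadic.one)

noncomputable def phi (x : ℝ) : ℝ := if x ≤ 0 then expPL x else 1 - expPL (-x)

lemma phi_of_nonpos {x : ℝ} (hx : x ≤ 0) : phi x = expPL x := if_pos hx

lemma phi_of_nonneg {x : ℝ} (hx : 0 ≤ x) : phi x = 1 - expPL (-x) := by
  rcases hx.lt_or_eq with hx | rfl
  · exact if_neg hx.not_ge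
  · rw [phi_of_nonpos le_rfl, neg_zero, expPL_zero]
    norm_num

lemma expPL_le_half {x : ℝ} (hx : x ≤ 0) : expPL x ≤ 1 / 2 :=
  expPL_zero ▸ expPL_strictMono.monotone hx

lemma phi_strictMono : StrictMono phi := by
  refine StrictMonoOn.Iic_union_Ici (a := 0) (fun x hx y hy hxy => ?_) fun x hx y hy hxy => ?_
  · rw [phi_of_nonpos hx, phi_of_nonpos hy]
    exact expPL_strictMono hxy
  · rw [phi_of_nonneg hx, phi_of_nonneg hy]
    linarith [expPL_strictMono (neg_lt_neg hxy)]

lemma phi_mem_Ioo (x : ℝ) : phi x ∈ Ioo 0 1 := by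
  rcases le_total x 0 with hx | hx
  · rw [phi_of_nonpos hx]
    exact ⟨expPL_pos x, by linarith [expPL_le_half hx]⟩
  · rw [phi_of_nonneg hx]
    exact ⟨by linarith [expPL_le_half (neg_nonpos.2 hx)], by linarith [expPL_pos (-x)]⟩

lemma exists_phi_eq {y : ℝ} (hy : y ∈ Ioo 0 1) : ∃ x, phi x = y := by
  have hle {x : ℝ} (h : expPL x ≤ 1 / 2) : x ≤ 0 :=
    expPL_strictMono.le_iff_le.1 (expPL_zero ▸ h)
  rcases le_total y (1 / 2) with hy' | hy'
  · obtain ⟨x, rfl⟩ := exists_expPL_eq hy.1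
    exact ⟨x, phi_of_nonpos (hle hy')⟩
  · obtain ⟨x, hx⟩ := exists_expPL_eq (sub_pos.2 hy.2)
    refine ⟨-x, ?_⟩
    rw [phi_of_nonneg (neg_nonneg.2 (hle (by linarith))), neg_neg, hx]
    ring

lemma phi_sub_intCast {x : ℝ} {a : ℤ} (hx : x ≤ 0) (hxa : x - a ≤ 0) :
    phi (x - a) = 2 ^ (-a) * phi x := by
  rw [phi_of_nonpos hx, phi_of_nonpos hxa, sub_eq_add_neg, ← Int.cast_neg, expPL_add_intCast]

lemma one_sub_phi_sub_intCast {x : ℝ} {b : ℤ} (hx : 0 ≤ x) (hxb : 0 ≤ x - b) :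
    1 - phi (x - b) = 2 ^ b * (1 - phi x) := by
  rw [phi_of_nonneg hx, phi_of_nonneg hxb, show -(x - b) = -x + b by ring, expPL_add_intCast]
  ring

lemma IsDyadic.phi {x : ℝ} (hx : IsDyadic x) : IsDyadic (phi x) := by
  rcases le_total x 0 with h | h
  · rw [phi_of_nonpos h]; exact hx.expPL
  · rw [phi_of_nonneg h]; exact IsDyadic.one.sub hx.neg.expPL

lemma exists_phi_eq_affine (n : ℤ) :
    ∃ c : ℤ, ∀ x ∈ Icc (n : ℝ) (n + 1), phi x = phi n + 2 ^ c * (x - n) := by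
  rcases lt_or_ge n 0 with hn | hn
  · have hn' : (n : ℝ) + 1 ≤ 0 := by exact_mod_cast hn
    refine ⟨n - 1, fun x hx => ?_⟩
    rw [phi_of_nonpos (hx.2.trans hn'), phi_of_nonpos (by linarith), expPL_eq_of_mem_Icc hx,
      expPL_eq_of_mem_Icc ⟨le_rfl, by linarith⟩]
    ring
  · have hn' : (0 : ℝ) ≤ n := by exact_mod_cast hn
    have hmem {x : ℝ} (hx : x ∈ Icc (n : ℝ) (n + 1)) :
        -x ∈ Icc ((-(n + 1) : ℤ) : ℝ) ((-(n + 1) : ℤ) + 1) := by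
      push_cast; constructor <;> linarith [hx.1, hx.2]
    refine ⟨-(n + 1) - 1, fun x hx => ?_⟩
    rw [phi_of_nonneg (hn'.trans hx.1), phi_of_nonneg hn', expPL_eq_of_mem_Icc (hmem hx),
      expPL_eq_of_mem_Icc (hmem ⟨le_rfl, by linarith⟩)]
    push_cast
    ring

lemma dyadicPLOn_phi_intCast {m n : ℤ} (hmn : m ≤ n) : DyadicPLOn phi m n := by
  induction n, hmn using Int.leInduction with
  | base => exact .affine 0 ⟨le_rfl, .intCast m, .intCast m, (IsDyadic.intCast m).phi,
      fun s hs => by simp [le_antisymm hs.2 hs.1]⟩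
  | succ n hmn ih =>
    obtain ⟨c, hc⟩ := exists_phi_eq_affine n
    exact ih.trans (.affine c ⟨by push_cast; linarith, .intCast n, .intCast (n + 1),
      (IsDyadic.intCast n).phi, by exact_mod_cast hc⟩)

noncomputable def phiInv : ℝ → ℝ := Function.invFun phi

lemma phiInv_phi (x : ℝ) : phiInv (phi x) = x :=
  Function.leftInverse_invFun phi_strictMono.injective x

lemma phi_phiInv {y : ℝ} (hy : y ∈ Ioo 0 1) : phi (phiInv y) = y :=
  Function.invFun_eq (exists_phi_eq hy)

lemma phiInv_strictMonoOn : StrictMonoOn phiInv (Ioo 0 1) := fun x hx y hy hxy =>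
  phi_strictMono.lt_iff_lt.1 (by rwa [phi_phiInv hx, phi_phiInv hy])

lemma dyadicPLOn_phi {x y : ℝ} (hx : IsDyadic x) (hy : IsDyadic y) (hxy : x ≤ y) :
    DyadicPLOn phi x y :=
  (dyadicPLOn_phi_intCast ((Int.floor_le_ceil x).trans (Int.ceil_mono hxy))).mono hx hy
    (Int.floor_le x) hxy (Int.le_ceil y)

lemma dyadicPLOn_phiInv {x y : ℝ} (hx : IsDyadic x) (hy : IsDyadic y) (hx₀ : 0 < x)
    (hxy : x ≤ y) (hy₁ : y < 1) : DyadicPLOn phiInv x y := by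
  have hmn : ⌊phiInv x⌋ ≤ ⌈phiInv y⌉ :=
    (Int.floor_le_ceil _).trans (Int.ceil_mono (phiInv_strictMonoOn.monotoneOn
      ⟨hx₀, hxy.trans_lt hy₁⟩ ⟨hx₀.trans_le hxy, hy₁⟩ hxy))
  have h := (dyadicPLOn_phi_intCast hmn).inverse fun t _ => phiInv_phi t
  refine h.mono hx hy ?_ hxy ?_
  · conv_rhs => rw [← phi_phiInv ⟨hx₀, hxy.trans_lt hy₁⟩]
    exact phi_strictMono.monotone (Int.floor_le _)
  · conv_lhs => rw [← phi_phiInv ⟨hx₀.trans_le hxy, hy₁⟩]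
    exact phi_strictMono.monotone (Int.le_ceil _)

namespace DyadicPLOn

variable {f : ℝ → ℝ} {a b : ℝ}

lemma conj_phi (h : DyadicPLOn f a b) : DyadicPLOn (phi ∘ f ∘ phiInv) (phi a) (phi b) := by
  have hab := h.le
  have hinv := dyadicPLOn_phiInv h.isDyadic_left.phi h.isDyadic_right.phi (phi_mem_Ioo a).1
    (phi_strictMono.monotone hab) (phi_mem_Ioo b).2
  rw [← phiInv_phi a, ← phiInv_phi b] at h
  refine DyadicPLOn.comp ?_ (h.comp hinv)
  simp only [Function.comp_apply, phiInv_phi] at h ⊢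
  exact dyadicPLOn_phi h.isDyadic_apply_left h.isDyadic_apply_right
    (h.monotoneOn ⟨le_rfl, hab⟩ ⟨hab, le_rfl⟩ hab)

lemma conj_phiInv (h : DyadicPLOn f (phi a) (phi b)) (ha : IsDyadic a) (hb : IsDyadic b)
    (hfa : f (phi a) ∈ Ioo 0 1) (hfb : f (phi b) ∈ Ioo 0 1) :
    DyadicPLOn (phiInv ∘ f ∘ phi) a b := by
  have hab := phi_strictMono.le_iff_le.1 h.le
  exact DyadicPLOn.comp (f := f ∘ phi) (dyadicPLOn_phiInv h.isDyadic_apply_left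
    h.isDyadic_apply_right hfa.1 (h.monotoneOn ⟨le_rfl, h.le⟩ ⟨h.le, le_rfl⟩ h.le) hfb.2)
    (h.comp (dyadicPLOn_phi ha hb hab))

end DyadicPLOn

lemma phi_eq_zpow_mul_iff {x s : ℝ} {a : ℤ} (hs : s ≤ 0) (hsa : s - a ≤ 0) :
    phi x = 2 ^ (-a) * phi s ↔ x = s - a := by
  rw [← phi_sub_intCast hs hsa, phi_strictMono.injective.eq_iff]

lemma phi_eq_one_sub_zpow_mul_iff {x s : ℝ} {b : ℤ} (hs : 0 ≤ s) (hsb : 0 ≤ s - b) :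
    phi x = 1 - 2 ^ b * (1 - phi s) ↔ x = s - b := by
  rw [← one_sub_phi_sub_intCast hs hsb, sub_sub_cancel, phi_strictMono.injective.eq_iff]

lemma exists_intCast_le_and_phi_le {δ : ℝ} (hδ : 0 < δ) (c : ℝ) :
    ∃ L : ℤ, (L : ℝ) ≤ c ∧ phi L ≤ δ := by
  have hmem : min δ (1 / 2) ∈ Ioo 0 1 :=
    ⟨lt_min hδ one_half_pos, (min_le_right _ _).trans_lt one_half_lt_one⟩
  refine ⟨⌊min (phiInv (min δ (1 / 2))) c⌋, (Int.floor_le _).trans (min_le_right _ _), ?_⟩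
  calc phi ⌊min (phiInv (min δ (1 / 2))) c⌋
      ≤ phi (phiInv (min δ (1 / 2))) :=
        phi_strictMono.monotone ((Int.floor_le _).trans (min_le_left _ _))
    _ ≤ δ := (phi_phiInv hmem).trans_le (min_le_left _ _)

lemma exists_le_intCast_and_le_phi {δ : ℝ} (hδ : δ < 1) (c : ℝ) :
    ∃ R : ℤ, c ≤ R ∧ δ ≤ phi R := by
  have hmem : max δ (1 / 2) ∈ Ioo 0 1 :=
    ⟨one_half_pos.trans_le (le_max_right _ _), max_lt hδ one_half_lt_one⟩
  refine ⟨⌈max (phiInv (max δ (1 / 2))) c⌉, (le_max_right _ _).trans (Int.le_ceil _), ?_⟩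
  calc δ ≤ phi (phiInv (max δ (1 / 2))) := (le_max_left _ _).trans (phi_phiInv hmem).ge
    _ ≤ phi ⌈max (phiInv (max δ (1 / 2))) c⌉ :=
        phi_strictMono.monotone ((le_max_left _ _).trans (Int.le_ceil _))

/-! ### Conjugation by `phi` -/

noncomputable def conjPhi (f : ℝ → ℝ) (y : ℝ) : ℝ := if y ∈ Ioo 0 1 then phi (f (phiInv y)) else y

lemma conjPhi_phi (f : ℝ → ℝ) (t : ℝ) : conjPhi f (phi t) = phi (f t) := by
  rw [conjPhi, if_pos (phi_mem_Ioo t), phiInv_phi]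

lemma conjPhi_of_notMem (f : ℝ → ℝ) {y : ℝ} (hy : y ∉ Ioo 0 1) : conjPhi f y = y := if_neg hy

lemma conjPhi_conjPhi (f g : ℝ → ℝ) (y : ℝ) : conjPhi g (conjPhi f y) = conjPhi (g ∘ f) y := by
  by_cases hy : y ∈ Ioo 0 1
  · obtain ⟨t, rfl⟩ := exists_phi_eq hy
    simp only [conjPhi_phi, Function.comp_apply]
  · simp only [conjPhi_of_notMem _ hy]

lemma conjPhi_id (y : ℝ) : conjPhi id y = y := by
  by_cases hy : y ∈ Ioo 0 1
  · obtain ⟨t, rfl⟩ := exists_phi_eq hy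
    rw [conjPhi_phi, id]
  · exact conjPhi_of_notMem _ hy

lemma conjPhi_mem_Icc (f : ℝ → ℝ) {y : ℝ} (hy : y ∈ I) : conjPhi f y ∈ I := by
  by_cases hy' : y ∈ Ioo 0 1
  · obtain ⟨t, rfl⟩ := exists_phi_eq hy'
    rw [conjPhi_phi]
    exact Ioo_subset_Icc_self (phi_mem_Ioo _)
  · rwa [conjPhi_of_notMem _ hy']

lemma strictMono_conjPhi {f : ℝ → ℝ} (hf : StrictMono f) : StrictMono (conjPhi f) := by
  intro x y hxy
  by_cases hx : x ∈ Ioo 0 1 <;> by_cases hy : y ∈ Ioo 0 1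
  · obtain ⟨s, rfl⟩ := exists_phi_eq hx
    obtain ⟨t, rfl⟩ := exists_phi_eq hy
    rw [conjPhi_phi, conjPhi_phi]
    exact phi_strictMono (hf (phi_strictMono.lt_iff_lt.1 hxy))
  · obtain ⟨s, rfl⟩ := exists_phi_eq hx
    have : 1 ≤ y := by
      by_contra h
      exact hy ⟨hx.1.trans hxy, not_le.1 h⟩
    rw [conjPhi_phi, conjPhi_of_notMem _ hy]
    exact (phi_mem_Ioo _).2.trans_le this
  · obtain ⟨t, rfl⟩ := exists_phi_eq hy
    have : x ≤ 0 := by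
      by_contra h
      exact hx ⟨not_le.1 h, hxy.trans hy.2⟩
    rw [conjPhi_phi, conjPhi_of_notMem _ hx]
    exact this.trans_lt (phi_mem_Ioo _).1
  · rwa [conjPhi_of_notMem _ hx, conjPhi_of_notMem _ hy]

noncomputable def conjIcc (f : ℝ ≃o ℝ) : I ≃o I where
  toFun y := ⟨conjPhi f y, conjPhi_mem_Icc f y.2⟩
  invFun y := ⟨conjPhi f.symm y, conjPhi_mem_Icc f.symm y.2⟩
  left_inv y := Subtype.ext <| by
    simp only [conjPhi_conjPhi, show ⇑f.symm ∘ ⇑f = id from funext f.symm_apply_apply,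
      conjPhi_id]
  right_inv y := Subtype.ext <| by
    simp only [conjPhi_conjPhi, show ⇑f ∘ ⇑f.symm = id from funext f.apply_symm_apply,
      conjPhi_id]
  map_rel_iff' := Subtype.mk_le_mk.trans (strictMono_conjPhi f.strictMono).le_iff_le

lemma extendIcc_conjIcc (f : ℝ ≃o ℝ) {y : ℝ} (hy : y ∈ I) :
    extendIcc (conjIcc f) y = conjPhi f y :=
  extendIcc_of_mem _ hy

noncomputable def lowerIcc (g : I ≃o I) : ℝ ≃o ℝ where
  toFun t := phiInv (extendIcc g (phi t))
  invFun t := phiInv (extendIcc g.symm (phi t))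
  left_inv t := by
    simp only [phi_phiInv (extendIcc_mem_Ioo g (phi_mem_Ioo t)),
      extendIcc_symm_extendIcc g (Ioo_subset_Icc_self (phi_mem_Ioo t)), phiInv_phi]
  right_inv t := by
    simp only [phi_phiInv (extendIcc_mem_Ioo g.symm (phi_mem_Ioo t)),
      extendIcc_extendIcc_symm g (Ioo_subset_Icc_self (phi_mem_Ioo t)), phiInv_phi]
  map_rel_iff' := by
    refine StrictMono.le_iff_le fun s t hst => phiInv_strictMonoOn (extendIcc_mem_Ioo g
      (phi_mem_Ioo s)) (extendIcc_mem_Ioo g (phi_mem_Ioo t)) ?_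
    exact strictMonoOn_extendIcc g (Ioo_subset_Icc_self (phi_mem_Ioo s))
      (Ioo_subset_Icc_self (phi_mem_Ioo t)) (phi_strictMono hst)

noncomputable def conjEquiv : (ℝ ≃o ℝ) ≃* (I ≃o I) where
  toFun := conjIcc
  invFun := lowerIcc
  left_inv f := by
    ext t
    change phiInv (extendIcc (conjIcc f) (phi t)) = f t
    rw [extendIcc_conjIcc f (Ioo_subset_Icc_self (phi_mem_Ioo t)), conjPhi_phi, phiInv_phi]
  right_inv g := by
    ext y
    change conjPhi (lowerIcc g) y = g y
    rw [← extendIcc_coe]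
    by_cases hy : (y : ℝ) ∈ Ioo 0 1
    · obtain ⟨t, ht⟩ := exists_phi_eq hy
      change conjPhi (fun t => phiInv (extendIcc g (phi t))) y = _
      rw [← ht, conjPhi_phi, phi_phiInv (extendIcc_mem_Ioo g (phi_mem_Ioo t))]
    · rw [conjPhi_of_notMem _ hy, extendIcc_of_notMem_Ioo g y.2 hy]
  map_mul' f g := by
    ext y
    exact (conjPhi_conjPhi g f y).symm

lemma extendIcc_conjEquiv_phi (f : ℝ ≃o ℝ) (t : ℝ) :
    extendIcc (conjEquiv f) (phi t) = phi (f t) :=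
  (extendIcc_conjIcc f (Ioo_subset_Icc_self (phi_mem_Ioo t))).trans (conjPhi_phi f t)

section Conjugate

variable {f G : ℝ → ℝ}

lemma eqOn_phi_comp_comp_phiInv (hG : ∀ t, G (phi t) = phi (f t)) :
    EqOn (phi ∘ f ∘ phiInv) G (Ioo 0 1) := fun y hy => by
  obtain ⟨t, rfl⟩ := exists_phi_eq hy
  simp only [Function.comp_apply, phiInv_phi, hG]

lemma dyadicAffineOn_of_eq_sub_left (hG : ∀ t, G (phi t) = phi (f t)) (hG₀ : G 0 = 0)
    {L a : ℤ} (hL : (L : ℝ) ≤ 0) (hLa : (L : ℝ) ≤ a) (ha : ∀ s ≤ (L : ℝ), f s = s - a) :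
    DyadicAffineOn G (-a) 0 (phi L) := by
  refine ⟨(phi_mem_Ioo _).1.le, .zero, (IsDyadic.intCast _).phi, by rw [hG₀]; exact .zero,
    fun y hy => ?_⟩
  rw [hG₀, zero_add, sub_zero]
  rcases hy.1.eq_or_lt with rfl | hy₀
  · rw [hG₀, mul_zero]
  obtain ⟨t, rfl⟩ := exists_phi_eq ⟨hy₀, hy.2.trans_lt (phi_mem_Ioo _).2⟩
  have ht := phi_strictMono.le_iff_le.1 hy.2
  rw [hG, phi_eq_zpow_mul_iff (by linarith) (by linarith)]
  exact ha t ht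

lemma dyadicAffineOn_of_eq_sub_right (hG : ∀ t, G (phi t) = phi (f t)) (hG₁ : G 1 = 1)
    {R b : ℤ} (hR : 0 ≤ (R : ℝ)) (hRb : (b : ℝ) ≤ R) (hb : ∀ s, (R : ℝ) ≤ s → f s = s - b) :
    DyadicAffineOn G b (phi R) 1 := by
  have key : ∀ y ∈ Icc (phi R) 1, G y = 1 - 2 ^ b * (1 - y) := fun y hy => by
    rcases hy.2.eq_or_lt with rfl | hy₁
    · rw [hG₁]; ring
    obtain ⟨t, rfl⟩ := exists_phi_eq ⟨(phi_mem_Ioo _).1.trans_le hy.1, hy₁⟩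
    have ht := phi_strictMono.le_iff_le.1 hy.1
    rw [hG, phi_eq_one_sub_zpow_mul_iff (by linarith) (by linarith)]
    exact hb t ht
  refine ⟨(phi_mem_Ioo _).2.le, (IsDyadic.intCast _).phi, .one, ?_, fun y hy => ?_⟩
  · rw [hG, hb _ le_rfl]
    exact ((IsDyadic.intCast _).sub (.intCast _)).phi
  · rw [key y hy, key _ ⟨le_rfl, (phi_mem_Ioo _).2.le⟩]
    ring

end Conjugate

lemma IsPL2R.dyadicPLOn_conj {f : ℝ ≃o ℝ} {G : ℝ → ℝ} (hf : IsPL2R f)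
    (hG : ∀ t, G (phi t) = phi (f t)) (hG₀ : G 0 = 0) (hG₁ : G 1 = 1) : DyadicPLOn G 0 1 := by
  obtain ⟨a, b, L, R, ha, hb, h⟩ := isPL2R_iff.1 hf
  obtain ⟨L', hL'⟩ : ∃ L' : ℤ, (L' : ℝ) ≤ min L (min 0 a) := ⟨_, Int.floor_le _⟩
  obtain ⟨R', hR'⟩ : ∃ R' : ℤ, max R (max 0 b) ≤ (R' : ℝ) := ⟨_, Int.le_ceil _⟩
  simp only [le_min_iff, max_le_iff] at hL' hR'
  have hmid := (h.extend ha hb (.intCast L') (.intCast R') hL'.1 hR'.1).conj_phi.congr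
    ((eqOn_phi_comp_comp_phiInv hG).mono (Icc_subset_Ioo (phi_mem_Ioo _).1 (phi_mem_Ioo _).2))
  refine ((DyadicPLOn.affine (-a) ?_).trans hmid).trans (.affine b ?_)
  · exact dyadicAffineOn_of_eq_sub_left hG hG₀ hL'.2.1 hL'.2.2 fun s hs => ha s (hs.trans hL'.1)
  · exact dyadicAffineOn_of_eq_sub_right hG hG₁ hR'.2.1 hR'.2.2 fun s hs => hb s (hR'.1.trans hs)

lemma DyadicPLOn.isPL2R_of_conj {f : ℝ ≃o ℝ} {G : ℝ → ℝ} (h : DyadicPLOn G 0 1)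
    (hG : ∀ t, G (phi t) = phi (f t)) (hG₀ : G 0 = 0) (hG₁ : G 1 = 1) : IsPL2R f := by
  obtain ⟨δ, hδ, z, hz⟩ := h.exists_eq_near_left one_pos
  obtain ⟨δ', hδ', z', hz'⟩ := h.exists_eq_near_right one_pos
  rw [hG₀] at hz
  rw [hG₁] at hz'
  obtain ⟨L, hL, hLδ⟩ := exists_intCast_le_and_phi_le hδ (min 0 (-z))
  obtain ⟨R, hR, hRδ⟩ := exists_le_intCast_and_le_phi hδ' (max 0 z')
  simp only [le_min_iff, max_le_iff] at hL hR
  refine isPL2R_iff.2 ⟨-z, z', L, R, fun s hs => ?_, fun s hs => ?_, ?_⟩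
  · have hφ : phi s ∈ Icc 0 δ :=
      ⟨(phi_mem_Ioo s).1.le, (phi_strictMono.monotone hs).trans hLδ⟩
    rw [← phi_eq_zpow_mul_iff (by linarith) (by push_cast; linarith), ← hG, hz _ hφ, neg_neg]
    ring
  · have hφ : phi s ∈ Icc δ' 1 := ⟨hRδ.trans (phi_strictMono.monotone hs), (phi_mem_Ioo s).2.le⟩
    rw [← phi_eq_one_sub_zpow_mul_iff (by linarith) (by linarith), ← hG, hz' _ hφ]
    ring
  · have hLR : phi L ≤ phi R := phi_strictMono.monotone (by linarith)
    refine ((h.mono (IsDyadic.intCast L).phi (IsDyadic.intCast R).phi (phi_mem_Ioo _).1.le hLR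
      (phi_mem_Ioo _).2.le).conj_phiInv (.intCast L) (.intCast R) ?_ ?_).congr fun s _ => ?_
    · rw [hG]; exact phi_mem_Ioo _
    · rw [hG]; exact phi_mem_Ioo _
    · simp only [Function.comp_apply, hG, phiInv_phi]

/-- `PL₂(ℝ)` and `PL₂(I)` are isomorphic as groups: each is a subgroup of the
group of order-preserving self-homeomorphisms (under composition), and these
two subgroups are isomorphic. -/
theorem pl2R_iso_pl2I :
    ∃ (H : Subgroup (Set.Icc (0:ℝ) 1 ≃o Set.Icc (0:ℝ) 1)) (K : Subgroup (ℝ ≃o ℝ)),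
      (∀ f, f ∈ H ↔ IsPL2I f) ∧ (∀ f, f ∈ K ↔ IsPL2R f) ∧ Nonempty (K ≃* H) := by
  refine ⟨pl2I, pl2I.map conjEquiv.symm.toMonoidHom, fun _ => Iff.rfl, fun f => ?_,
    ⟨(conjEquiv.symm.subgroupMap pl2I).symm⟩⟩
  rw [Subgroup.mem_map_equiv, MulEquiv.symm_symm]
  have hG := extendIcc_conjEquiv_phi f
  have hG₀ := extendIcc_zero (conjEquiv f)
  have hG₁ := extendIcc_one (conjEquiv f)
  exact isPL2I_iff.trans
    ⟨fun h => h.isPL2R_of_conj hG hG₀ hG₁, fun h => h.dyadicPLOn_conj hG hG₀ hG₁⟩
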